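/- Let H_pen be the block penalty Hamiltonian with pseudoinverse H_pen⁻¹ and zero-eigenspace projector P₀, and let a,b,c be three distinct blocks whose parameters satisfy σ₁g_{w₁}^{(a)} + σ₂g_{w₂}^{(a)} + σ₃g_{w₃}^{(b)} + σ₄g_{w₄}^{(c)} ≠ 0 for all sign choices σ₁,...,σ₄ ∈ {−1,1} and all w₁,...,w₄ ∈ {x,z}. If A is any operator of the form Z_i^{(a)}Z_j^{(b)}, X_i^{(a)}X_j^{(b)}, Z_i^{(a)}X_j^{(b)}, or X_i^{(a)}Z_j^{(b)}, and B is any operator of the same four forms with blocks (a,c), then P₀ A H_pen⁻¹ B P₀ = 0 and P₀ B H_pen⁻¹ A P₀ = 0. -/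
import Mathlib


open Matrix Kronecker

noncomputable section

def PauliX : Matrix (Fin 2) (Fin 2) ℂ := !![0, 1; 1, 0]
def PauliY : Matrix (Fin 2) (Fin 2) ℂ := !![0, -Complex.I; Complex.I, 0]
def PauliZ : Matrix (Fin 2) (Fin 2) ℂ := !![1, 0; 0, -1]

/-- The single-qubit operator `A` acting on qubit `i` of a register of qubits
indexed by `ι` (identity on all other qubits). -/
def pauliAt {ι : Type*} [Fintype ι] [DecidableEq ι] (A : Matrix (Fin 2) (Fin 2) ℂ)
    (i : ι) : Matrix (ι → Fin 2) (ι → Fin 2) ℂ :=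
  fun f g => A (f i) (g i) * ∏ j ∈ Finset.univ.erase i, (if f j = g j then 1 else 0)

/-- The block penalty Hamiltonian on `n` blocks of 4 qubits:
`H_pen = Σ_b (g_x⁽ᵇ⁾ X₁⁽ᵇ⁾X₂⁽ᵇ⁾ + g_z⁽ᵇ⁾ Z₁⁽ᵇ⁾Z₂⁽ᵇ⁾ + g_x⁽ᵇ⁾ X₃⁽ᵇ⁾X₄⁽ᵇ⁾ + g_z⁽ᵇ⁾ Z₃⁽ᵇ⁾Z₄⁽ᵇ⁾)`. -/
def HpenBlocks (n : ℕ) (gx gz : Fin n → ℝ) :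
    Matrix (Fin n × Fin 4 → Fin 2) (Fin n × Fin 4 → Fin 2) ℂ :=
  ∑ b : Fin n,
    ((gx b : ℂ) • (pauliAt PauliX (b, (0 : Fin 4)) * pauliAt PauliX (b, (1 : Fin 4))) +
     (gz b : ℂ) • (pauliAt PauliZ (b, (0 : Fin 4)) * pauliAt PauliZ (b, (1 : Fin 4))) +
     (gx b : ℂ) • (pauliAt PauliX (b, (2 : Fin 4)) * pauliAt PauliX (b, (3 : Fin 4))) +
     (gz b : ℂ) • (pauliAt PauliZ (b, (2 : Fin 4)) * pauliAt PauliZ (b, (3 : Fin 4))))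

namespace GadgetAux
variable {ι : Type*} [Fintype ι] [DecidableEq ι]

lemma sum_collapse (i : ι) (f : ι → Fin 2) (F : (ι → Fin 2) → ℂ) :
    (∑ h : ι → Fin 2, (∏ k ∈ Finset.univ.erase i, if f k = h k then (1:ℂ) else 0) * F h)
    = ∑ x : Fin 2, F (Function.update f i x) := by
  classical
  have hinj : Function.Injective (fun x : Fin 2 => Function.update f i x) := by
    intro x y hxy
    have := congrFun hxy i
    simpa using this
  rw [← Finset.sum_subset (Finset.subset_univ ((Finset.univ.image
      (fun x : Fin 2 => Function.update f i x))))]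
  · rw [Finset.sum_image (fun x _ y _ h => hinj h)]
    apply Finset.sum_congr rfl
    intro x _
    have : (∏ k ∈ Finset.univ.erase i, if f k = Function.update f i x k then (1:ℂ) else 0) = 1 := by
      apply Finset.prod_eq_one
      intro k hk
      have hki : k ≠ i := Finset.ne_of_mem_erase hk
      rw [Function.update_of_ne hki]
      simp
    rw [this, one_mul]
  · intro h _ hnot
    have : ∃ k, k ≠ i ∧ f k ≠ h k := by
      by_contra hc
      push_neg at hc
      apply hnot
      simp only [Finset.mem_image, Finset.mem_univ, true_and]
      refine ⟨h i, ?_⟩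
      funext k
      by_cases hk : k = i
      · subst hk; simp
      · rw [Function.update_of_ne hk]; exact hc k hk
    obtain ⟨k, hki, hfk⟩ := this
    rw [Finset.prod_eq_zero (Finset.mem_erase.mpr ⟨hki, Finset.mem_univ k⟩) (by simp [hfk]),
      zero_mul]

lemma pauliAt_mul_same (A B : Matrix (Fin 2) (Fin 2) ℂ) (i : ι) :
    pauliAt A i * pauliAt B i = pauliAt (A * B) i := by
  ext f g
  rw [Matrix.mul_apply]
  simp only [pauliAt]
  rw [show (∑ h : ι → Fin 2, (A (f i) (h i) * ∏ k ∈ Finset.univ.erase i, if f k = h k then (1:ℂ) else 0) *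
      (B (h i) (g i) * ∏ k ∈ Finset.univ.erase i, if h k = g k then (1:ℂ) else 0))
      = ∑ h : ι → Fin 2, (∏ k ∈ Finset.univ.erase i, if f k = h k then (1:ℂ) else 0) *
        (A (f i) (h i) * B (h i) (g i) * ∏ k ∈ Finset.univ.erase i, if h k = g k then (1:ℂ) else 0)
    from Finset.sum_congr rfl (fun h _ => by ring)]
  rw [sum_collapse]
  rw [Matrix.mul_apply]
  rw [Finset.sum_mul]
  apply Finset.sum_congr rfl
  intro x _
  have h1 : ∀ k, k ≠ i → Function.update f i x k = f k := fun k hk => Function.update_of_ne hk _ _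
  have : (∏ k ∈ Finset.univ.erase i, if Function.update f i x k = g k then (1:ℂ) else 0)
      = ∏ k ∈ Finset.univ.erase i, if f k = g k then (1:ℂ) else 0 := by
    apply Finset.prod_congr rfl
    intro k hk
    rw [h1 k (Finset.ne_of_mem_erase hk)]
  simp only [Function.update_self]
  rw [this]

lemma pauliAt_mul_apply_ne {i j : ι} (hij : i ≠ j) (A B : Matrix (Fin 2) (Fin 2) ℂ)
    (f g : ι → Fin 2) :
    (pauliAt A i * pauliAt B j) f g = A (f i) (g i) * B (f j) (g j) *
      ∏ k ∈ (Finset.univ.erase i).erase j, (if f k = g k then (1:ℂ) else 0) := by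
  rw [Matrix.mul_apply]
  simp only [pauliAt]
  rw [show (∑ h : ι → Fin 2, (A (f i) (h i) * ∏ k ∈ Finset.univ.erase i, if f k = h k then (1:ℂ) else 0) *
      (B (h j) (g j) * ∏ k ∈ Finset.univ.erase j, if h k = g k then (1:ℂ) else 0))
      = ∑ h : ι → Fin 2, (∏ k ∈ Finset.univ.erase i, if f k = h k then (1:ℂ) else 0) *
        (A (f i) (h i) * (B (h j) (g j) * ∏ k ∈ Finset.univ.erase j, if h k = g k then (1:ℂ) else 0))
    from Finset.sum_congr rfl (fun h _ => by ring)]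
  rw [sum_collapse]
  have hji : j ≠ i := hij.symm
  have hupj : ∀ x, Function.update f i x j = f j := fun x => Function.update_of_ne hji _ _
  have hkey : ∀ x : Fin 2,
      (∏ k ∈ Finset.univ.erase j, if Function.update f i x k = g k then (1:ℂ) else 0)
      = (if x = g i then (1:ℂ) else 0) *
        ∏ k ∈ (Finset.univ.erase j).erase i, (if f k = g k then (1:ℂ) else 0) := by
    intro x
    have hi_mem : i ∈ Finset.univ.erase j := Finset.mem_erase.mpr ⟨hij, Finset.mem_univ i⟩
    rw [← Finset.mul_prod_erase _ _ hi_mem]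
    congr 1
    · simp
    · apply Finset.prod_congr rfl
      intro k hk
      have : k ≠ i := Finset.ne_of_mem_erase hk
      rw [Function.update_of_ne this]
  calc (∑ x : Fin 2, A (f i) (Function.update f i x i) * (B (Function.update f i x j) (g j) *
          ∏ k ∈ Finset.univ.erase j, if Function.update f i x k = g k then (1:ℂ) else 0))
      = ∑ x : Fin 2, (if x = g i then (1:ℂ) else 0) *
          (A (f i) x * B (f j) (g j) * ∏ k ∈ (Finset.univ.erase j).erase i, (if f k = g k then (1:ℂ) else 0)) := by
        apply Finset.sum_congr rfl
        intro x _
        rw [hupj, hkey, Function.update_self]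
        ring
    _ = A (f i) (g i) * B (f j) (g j) * ∏ k ∈ (Finset.univ.erase j).erase i, (if f k = g k then (1:ℂ) else 0) := by
        simp only [ite_mul, one_mul, zero_mul]
        rw [Finset.sum_ite_eq' Finset.univ (g i)]
        simp
    _ = _ := by rw [Finset.erase_right_comm]

lemma pauliAt_comm {i j : ι} (hij : i ≠ j) (A B : Matrix (Fin 2) (Fin 2) ℂ) :
    pauliAt A i * pauliAt B j = pauliAt B j * pauliAt A i := by
  ext f g
  rw [pauliAt_mul_apply_ne hij, pauliAt_mul_apply_ne hij.symm]
  rw [Finset.erase_right_comm]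
  ring

lemma pauliAt_one (i : ι) : pauliAt (1 : Matrix (Fin 2) (Fin 2) ℂ) i = 1 := by
  ext f g
  simp only [pauliAt, Matrix.one_apply]
  by_cases h : f = g
  · subst h; simp
  · have : ¬ (∀ k, f k = g k) := fun hc => h (funext hc)
    push_neg at this
    obtain ⟨k, hk⟩ := this
    by_cases hki : k = i
    · subst hki
      simp [hk, h]
    · rw [Finset.prod_eq_zero (Finset.mem_erase.mpr ⟨hki, Finset.mem_univ k⟩) (by simp [hk])]
      simp [h]

lemma pauliAt_neg (A : Matrix (Fin 2) (Fin 2) ℂ) (i : ι) :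
    pauliAt (-A) i = -(pauliAt A i) := by
  ext f g
  simp [pauliAt, neg_mul]

lemma pauliAt_conjTranspose (A : Matrix (Fin 2) (Fin 2) ℂ) (i : ι) :
    (pauliAt A i)ᴴ = pauliAt Aᴴ i := by
  ext f g
  simp only [Matrix.conjTranspose_apply, pauliAt, Matrix.conjTranspose_apply]
  rw [star_mul']
  congr 1
  · rw [star_prod]
    apply Finset.prod_congr rfl
    intro k _
    by_cases h : g k = f k
    · simp [h, eq_comm]
    · have h' : ¬ f k = g k := fun hc => h hc.symm
      simp [h, h']


def pw (w : Bool) : Matrix (Fin 2) (Fin 2) ℂ := if w then PauliX else PauliZ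

lemma pw_sq (w : Bool) : pw w * pw w = 1 := by
  cases w <;>
  · ext i j
    fin_cases i <;> fin_cases j <;>
      simp [pw, PauliX, PauliZ, Matrix.mul_apply, Fin.sum_univ_two, Matrix.one_apply]

lemma pw_anti {w u : Bool} (h : w ≠ u) : pw w * pw u = -(pw u * pw w) := by
  cases w <;> cases u <;> simp at h <;>
  · ext i j
    fin_cases i <;> fin_cases j <;>
      simp [pw, PauliX, PauliZ, Matrix.mul_apply, Fin.sum_univ_two]

lemma pw_herm (w : Bool) : (pw w)ᴴ = pw w := by
  cases w <;>
  · ext i j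
    fin_cases i <;> fin_cases j <;> simp [pw, PauliX, PauliZ]

section Terms
variable {n : ℕ}

def site (p k : Bool) : Fin 4 := if p then (if k then 3 else 2) else (if k then 1 else 0)

def pairOf (i : Fin 4) : Bool := decide (2 ≤ i.val)

def posOf (i : Fin 4) : Bool := decide (i.val = 1 ∨ i.val = 3)

lemma site_pairOf_posOf (i : Fin 4) : site (pairOf i) (posOf i) = i := by
  fin_cases i <;> rfl

lemma pairOf_site (p k : Bool) : pairOf (site p k) = p := by
  cases p <;> cases k <;> rfl

lemma site_ne (p : Bool) : site p false ≠ site p true := by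
  cases p <;> decide

def trm (d : Fin n) (p u : Bool) : Matrix (Fin n × Fin 4 → Fin 2) (Fin n × Fin 4 → Fin 2) ℂ :=
  pauliAt (pw u) (d, site p false) * pauliAt (pw u) (d, site p true)

lemma swap_single {M N : Matrix (Fin 2) (Fin 2) ℂ} {s t : Fin n × Fin 4}
    (h : s ≠ t ∨ M * N = N * M) :
    pauliAt M s * pauliAt N t = pauliAt N t * pauliAt M s := by
  by_cases hst : s = t
  · subst hst
    rcases h with h | h
    · exact absurd rfl h
    · rw [pauliAt_mul_same, pauliAt_mul_same, h]
  · exact pauliAt_comm hst _ _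

lemma anti_single {w u : Bool} (h : w ≠ u) (s : Fin n × Fin 4) :
    pauliAt (pw w) s * pauliAt (pw u) s = -(pauliAt (pw u) s * pauliAt (pw w) s) := by
  rw [pauliAt_mul_same, pauliAt_mul_same, pw_anti h, pauliAt_neg]

lemma single_trm_comm {w u : Bool} {d e : Fin n} {i : Fin 4} {p : Bool}
    (h : d ≠ e ∨ pairOf i ≠ p ∨ w = u) :
    pauliAt (pw w) (d, i) * trm e p u = trm e p u * pauliAt (pw w) (d, i) := by
  have key : ∀ k : Bool, pauliAt (pw w) (d, i) * pauliAt (pw u) (e, site p k)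
      = pauliAt (pw u) (e, site p k) * pauliAt (pw w) (d, i) := by
    intro k
    apply swap_single
    rcases h with h | h | h
    · exact Or.inl (fun hc => h (congrArg Prod.fst hc))
    · refine Or.inl (fun hc => h ?_)
      have : i = site p k := congrArg Prod.snd hc
      rw [this, pairOf_site]
    · subst h; exact Or.inr rfl
  unfold trm
  rw [← mul_assoc, key false, mul_assoc, key true, ← mul_assoc]

lemma single_trm_anti (w : Bool) (d : Fin n) (i : Fin 4) :
    pauliAt (pw w) (d, i) * trm d (pairOf i) (!w) = -(trm d (pairOf i) (!w) * pauliAt (pw w) (d, i)) := by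
  have hwu : w ≠ !w := by cases w <;> decide
  have hsite := site_pairOf_posOf i
  unfold trm
  cases hk : posOf i
  · rw [hk] at hsite
    have hne2 : ((d, i) : Fin n × Fin 4) ≠ (d, site (pairOf i) true) := by
      simp only [ne_eq, Prod.mk.injEq, true_and]
      have h0 := site_ne (pairOf i); rw [hsite] at h0; exact h0
    rw [hsite, ← mul_assoc, anti_single hwu, neg_mul, mul_assoc,
      swap_single (M := pw w) (Or.inl hne2), ← mul_assoc]
  · rw [hk] at hsite
    have hne2 : ((d, i) : Fin n × Fin 4) ≠ (d, site (pairOf i) false) := by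
      simp only [ne_eq, Prod.mk.injEq, true_and]
      have h0 := (site_ne (pairOf i)).symm; rw [hsite] at h0; exact h0
    rw [hsite, ← mul_assoc, swap_single (M := pw w) (Or.inl hne2), mul_assoc,
      anti_single hwu, mul_neg, ← mul_assoc]

lemma trm_sq (d : Fin n) (p u : Bool) : trm d p u * trm d p u = 1 := by
  unfold trm
  have hne : ((d, site p false) : Fin n × Fin 4) ≠ (d, site p true) := by
    simp only [ne_eq, Prod.mk.injEq, true_and]; exact site_ne p
  rw [mul_assoc, ← mul_assoc (pauliAt (pw u) (d, site p true)),
    pauliAt_comm hne.symm, mul_assoc, pauliAt_mul_same, pw_sq, pauliAt_one, mul_one,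
    pauliAt_mul_same, pw_sq, pauliAt_one]

lemma trm_herm (d : Fin n) (p u : Bool) : (trm d p u)ᴴ = trm d p u := by
  unfold trm
  have hne : ((d, site p false) : Fin n × Fin 4) ≠ (d, site p true) := by
    simp only [ne_eq, Prod.mk.injEq, true_and]; exact site_ne p
  rw [Matrix.conjTranspose_mul, pauliAt_conjTranspose, pauliAt_conjTranspose, pw_herm,
    pauliAt_comm hne.symm]

lemma pair_cc {P Q T : Matrix (Fin n × Fin 4 → Fin 2) (Fin n × Fin 4 → Fin 2) ℂ}
    (h1 : P * T = T * P) (h2 : Q * T = T * Q) : (P * Q) * T = T * (P * Q) := by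
  rw [mul_assoc, h2, ← mul_assoc, h1, mul_assoc]

lemma pair_aa {P Q T : Matrix (Fin n × Fin 4 → Fin 2) (Fin n × Fin 4 → Fin 2) ℂ}
    (h1 : P * T = -(T * P)) (h2 : Q * T = -(T * Q)) : (P * Q) * T = T * (P * Q) := by
  rw [mul_assoc, h2, mul_neg, ← mul_assoc, h1, neg_mul, neg_neg, mul_assoc]

lemma pair_ac {P Q T : Matrix (Fin n × Fin 4 → Fin 2) (Fin n × Fin 4 → Fin 2) ℂ}
    (h1 : P * T = -(T * P)) (h2 : Q * T = T * Q) : (P * Q) * T = -(T * (P * Q)) := by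
  rw [mul_assoc, h2, ← mul_assoc, h1, neg_mul, mul_assoc]

lemma pair_ca {P Q T : Matrix (Fin n × Fin 4 → Fin 2) (Fin n × Fin 4 → Fin 2) ℂ}
    (h1 : P * T = T * P) (h2 : Q * T = -(T * Q)) : (P * Q) * T = -(T * (P * Q)) := by
  rw [mul_assoc, h2, mul_neg, ← mul_assoc, h1, mul_assoc]

lemma trm_comm (d e : Fin n) (p q u v : Bool) :
    trm d p u * trm e q v = trm e q v * trm d p u := by
  by_cases hdp : d = e ∧ p = q
  · obtain ⟨rfl, rfl⟩ := hdp
    by_cases huv : u = v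
    · subst huv; rfl
    · have hvu : v = !u := by revert huv; cases u <;> cases v <;> decide
      subst hvu
      have h1 : pauliAt (pw u) (d, site p false) * trm d p (!u) = -(trm d p (!u) * pauliAt (pw u) (d, site p false)) := by
        have := single_trm_anti u d (site p false)
        rwa [pairOf_site] at this
      have h2 : pauliAt (pw u) (d, site p true) * trm d p (!u) = -(trm d p (!u) * pauliAt (pw u) (d, site p true)) := by
        have := single_trm_anti u d (site p true)
        rwa [pairOf_site] at this
      exact pair_aa h1 h2
  · have h : ∀ k : Bool, pauliAt (pw u) (d, site p k) * trm e q v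
        = trm e q v * pauliAt (pw u) (d, site p k) := by
      intro k
      apply single_trm_comm
      rcases not_and_or.mp hdp with h | h
      · exact Or.inl h
      · exact Or.inr (Or.inl (by rw [pairOf_site]; exact h))
    exact pair_cc (h false) (h true)

end Terms

section Blocks
variable {n : ℕ}

abbrev Mat (n : ℕ) := Matrix (Fin n × Fin 4 → Fin 2) (Fin n × Fin 4 → Fin 2) ℂ

def gr (gx gz : Fin n → ℝ) (u : Bool) (d : Fin n) : ℝ := if u then gx d else gz d

def blk (gx gz : Fin n → ℝ) (d : Fin n) : Mat n :=
  (gx d : ℂ) • trm d false true + (gz d : ℂ) • trm d false false +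
  (gx d : ℂ) • trm d true true + (gz d : ℂ) • trm d true false

variable (gx gz : Fin n → ℝ)

lemma flip1 (P T₁ T₂ T₃ T₄ : Mat n) (c₁ c₂ c₃ c₄ : ℂ)
    (h1 : P*T₁ = -(T₁*P)) (h2 : P*T₂ = T₂*P) (h3 : P*T₃ = T₃*P) (h4 : P*T₄ = T₄*P) :
    P * (c₁•T₁ + c₂•T₂ + c₃•T₃ + c₄•T₄)
      = (c₁•T₁ + c₂•T₂ + c₃•T₃ + c₄•T₄) * P - (2:ℂ)•(c₁•(T₁*P)) := by
  simp only [mul_add, add_mul, mul_smul_comm, smul_mul_assoc, h1, h2, h3, h4, smul_neg]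
  module

lemma flip2 (P T₁ T₂ T₃ T₄ : Mat n) (c₁ c₂ c₃ c₄ : ℂ)
    (h1 : P*T₁ = T₁*P) (h2 : P*T₂ = -(T₂*P)) (h3 : P*T₃ = T₃*P) (h4 : P*T₄ = T₄*P) :
    P * (c₁•T₁ + c₂•T₂ + c₃•T₃ + c₄•T₄)
      = (c₁•T₁ + c₂•T₂ + c₃•T₃ + c₄•T₄) * P - (2:ℂ)•(c₂•(T₂*P)) := by
  simp only [mul_add, add_mul, mul_smul_comm, smul_mul_assoc, h1, h2, h3, h4, smul_neg]
  module

lemma flip3 (P T₁ T₂ T₃ T₄ : Mat n) (c₁ c₂ c₃ c₄ : ℂ)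
    (h1 : P*T₁ = T₁*P) (h2 : P*T₂ = T₂*P) (h3 : P*T₃ = -(T₃*P)) (h4 : P*T₄ = T₄*P) :
    P * (c₁•T₁ + c₂•T₂ + c₃•T₃ + c₄•T₄)
      = (c₁•T₁ + c₂•T₂ + c₃•T₃ + c₄•T₄) * P - (2:ℂ)•(c₃•(T₃*P)) := by
  simp only [mul_add, add_mul, mul_smul_comm, smul_mul_assoc, h1, h2, h3, h4, smul_neg]
  module

lemma flip4 (P T₁ T₂ T₃ T₄ : Mat n) (c₁ c₂ c₃ c₄ : ℂ)
    (h1 : P*T₁ = T₁*P) (h2 : P*T₂ = T₂*P) (h3 : P*T₃ = T₃*P) (h4 : P*T₄ = -(T₄*P)) :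
    P * (c₁•T₁ + c₂•T₂ + c₃•T₃ + c₄•T₄)
      = (c₁•T₁ + c₂•T₂ + c₃•T₃ + c₄•T₄) * P - (2:ℂ)•(c₄•(T₄*P)) := by
  simp only [mul_add, add_mul, mul_smul_comm, smul_mul_assoc, h1, h2, h3, h4, smul_neg]
  module

lemma single_blk_comm {w : Bool} {d e : Fin n} {i : Fin 4} (h : d ≠ e) :
    pauliAt (pw w) (d,i) * blk gx gz e = blk gx gz e * pauliAt (pw w) (d,i) := by
  have k : ∀ p u : Bool, pauliAt (pw w) (d,i) * trm e p u = trm e p u * pauliAt (pw w) (d,i) :=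
    fun p u => single_trm_comm (Or.inl h)
  unfold blk
  simp only [mul_add, add_mul, mul_smul_comm, smul_mul_assoc, k]

lemma single_blk_flip (w : Bool) (d : Fin n) (i : Fin 4) :
    pauliAt (pw w) (d,i) * blk gx gz d
      = blk gx gz d * pauliAt (pw w) (d,i)
        - (2:ℂ)•(((gr gx gz (!w) d : ℝ):ℂ)•(trm d (pairOf i) (!w) * pauliAt (pw w) (d,i))) := by
  have hanti := single_trm_anti w d i
  have hcp : ∀ u : Bool, pauliAt (pw w) (d,i) * trm d (!(pairOf i)) u
      = trm d (!(pairOf i)) u * pauliAt (pw w) (d,i) :=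
    fun u => single_trm_comm (Or.inr (Or.inl (by cases pairOf i <;> simp)))
  have hcw : pauliAt (pw w) (d,i) * trm d (pairOf i) w
      = trm d (pairOf i) w * pauliAt (pw w) (d,i) :=
    single_trm_comm (Or.inr (Or.inr rfl))
  unfold blk
  rcases hp : pairOf i with _ | _ <;> rcases hw : w with _ | _ <;> subst hw <;>
    rw [hp] at hanti hcp hcw <;>
    simp only [hp, Bool.not_false, Bool.not_true, gr, if_true, if_false] at hanti hcp hcw ⊢ <;>
    [exact flip1 _ _ _ _ _ _ _ _ _ hanti hcw (hcp true) (hcp false);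
     exact flip2 _ _ _ _ _ _ _ _ _ hcw hanti (hcp true) (hcp false);
     exact flip3 _ _ _ _ _ _ _ _ _ (hcp true) (hcp false) hanti hcw;
     exact flip4 _ _ _ _ _ _ _ _ _ (hcp true) (hcp false) hcw hanti]

end Blocks

section Rel
variable {n : ℕ} (gx gz : Fin n → ℝ)

lemma relO (w₁ w₂ : Bool) (a d : Fin n) (i j : Fin 4) (had : a ≠ d) :
    (pauliAt (pw w₁) (a,i) * pauliAt (pw w₂) (d,j)) * (∑ e, blk gx gz e)
      = (∑ e, blk gx gz e) * (pauliAt (pw w₁) (a,i) * pauliAt (pw w₂) (d,j))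
        - (2:ℂ)•((((gr gx gz (!w₁) a : ℝ):ℂ)•trm a (pairOf i) (!w₁)
            + ((gr gx gz (!w₂) d : ℝ):ℂ)•trm d (pairOf j) (!w₂))
          * (pauliAt (pw w₁) (a,i) * pauliAt (pw w₂) (d,j))) := by
  set P₁ := pauliAt (pw w₁) (a,i) with hP₁
  set P₂ := pauliAt (pw w₂) (d,j) with hP₂
  set O := P₁ * P₂ with hO
  set T₁ := trm a (pairOf i) (!w₁) with hT₁
  set T₂ := trm d (pairOf j) (!w₂) with hT₂
  set c₁ := ((gr gx gz (!w₁) a : ℝ):ℂ) with hc₁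
  set c₂ := ((gr gx gz (!w₂) d : ℝ):ℂ) with hc₂
  have key : ∀ e, O * blk gx gz e = blk gx gz e * O -
      ((if e = a then (2:ℂ)•(c₁•(T₁*O)) else 0) + (if e = d then (2:ℂ)•(c₂•(T₂*O)) else 0)) := by
    intro e
    by_cases hea : e = a
    · subst hea
      rw [if_pos rfl, if_neg had, add_zero]
      calc O * blk gx gz e = P₁ * (P₂ * blk gx gz e) := by rw [mul_assoc]
        _ = P₁ * (blk gx gz e * P₂) := by rw [single_blk_comm gx gz had.symm]
        _ = (P₁ * blk gx gz e) * P₂ := by rw [mul_assoc]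
        _ = (blk gx gz e * P₁ - (2:ℂ)•(c₁•(T₁*P₁))) * P₂ := by rw [single_blk_flip]
        _ = blk gx gz e * O - (2:ℂ)•(c₁•(T₁*O)) := by
            rw [sub_mul, smul_mul_assoc, smul_mul_assoc, mul_assoc, mul_assoc]
    · by_cases hed : e = d
      · subst hed
        rw [if_neg (fun h => had h.symm), if_pos rfl, zero_add]
        calc O * blk gx gz e = P₁ * (P₂ * blk gx gz e) := by rw [mul_assoc]
          _ = P₁ * (blk gx gz e * P₂ - (2:ℂ)•(c₂•(T₂*P₂))) := by rw [single_blk_flip]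
          _ = P₁ * (blk gx gz e * P₂) - (2:ℂ)•(c₂•(P₁*(T₂*P₂))) := by
              rw [mul_sub, mul_smul_comm, mul_smul_comm]
          _ = blk gx gz e * O - (2:ℂ)•(c₂•(T₂*O)) := by
              rw [← mul_assoc P₁, single_blk_comm gx gz had, mul_assoc,
                ← mul_assoc P₁ T₂, single_trm_comm (Or.inl had), mul_assoc]
      · rw [if_neg hea, if_neg hed, add_zero, sub_zero]
        calc O * blk gx gz e = P₁ * (P₂ * blk gx gz e) := by rw [mul_assoc]
          _ = P₁ * (blk gx gz e * P₂) := by rw [single_blk_comm gx gz (fun h => hed h.symm)]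
          _ = (P₁ * blk gx gz e) * P₂ := by rw [mul_assoc]
          _ = (blk gx gz e * P₁) * P₂ := by rw [single_blk_comm gx gz (fun h => hea h.symm)]
          _ = blk gx gz e * O := by rw [mul_assoc]
  rw [Finset.mul_sum, Finset.sum_congr rfl (fun e _ => key e), Finset.sum_sub_distrib,
    Finset.sum_add_distrib, Finset.sum_ite_eq' Finset.univ a, Finset.sum_ite_eq' Finset.univ d,
    if_pos (Finset.mem_univ a), if_pos (Finset.mem_univ d), ← Finset.sum_mul]
  congr 1
  rw [add_mul, smul_mul_assoc, smul_mul_assoc, smul_add]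

lemma rel2O (w₁ w₂ : Bool) (a d : Fin n) (i j : Fin 4) (had : a ≠ d) :
    (pauliAt (pw w₁) (a,i) * pauliAt (pw w₂) (d,j)) *
        (((gr gx gz (!w₁) a : ℝ):ℂ)•trm a (pairOf i) (!w₁)
          + ((gr gx gz (!w₂) d : ℝ):ℂ)•trm d (pairOf j) (!w₂))
      = -((((gr gx gz (!w₁) a : ℝ):ℂ)•trm a (pairOf i) (!w₁)
          + ((gr gx gz (!w₂) d : ℝ):ℂ)•trm d (pairOf j) (!w₂)) *
        (pauliAt (pw w₁) (a,i) * pauliAt (pw w₂) (d,j))) := by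
  have h1 : (pauliAt (pw w₁) (a,i) * pauliAt (pw w₂) (d,j)) * trm a (pairOf i) (!w₁)
      = -(trm a (pairOf i) (!w₁) * (pauliAt (pw w₁) (a,i) * pauliAt (pw w₂) (d,j))) :=
    pair_ac (single_trm_anti w₁ a i) (single_trm_comm (Or.inl had.symm))
  have h2 : (pauliAt (pw w₁) (a,i) * pauliAt (pw w₂) (d,j)) * trm d (pairOf j) (!w₂)
      = -(trm d (pairOf j) (!w₂) * (pauliAt (pw w₁) (a,i) * pauliAt (pw w₂) (d,j))) :=
    pair_ca (single_trm_comm (Or.inl had)) (single_trm_anti w₂ d j)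
  simp only [mul_add, add_mul, mul_smul_comm, smul_mul_assoc, h1, h2, smul_neg]
  module

lemma trm_H_comm (d : Fin n) (p u : Bool) :
    trm d p u * (∑ e, blk gx gz e) = (∑ e, blk gx gz e) * trm d p u := by
  rw [Finset.mul_sum, Finset.sum_mul]
  refine Finset.sum_congr rfl (fun e _ => ?_)
  have k : ∀ q v, trm d p u * trm e q v = trm e q v * trm d p u := fun q v => trm_comm _ _ _ _ _ _
  unfold blk
  simp only [mul_add, add_mul, mul_smul_comm, smul_mul_assoc, k]

lemma ext_mulVec {M N : Mat n} (h : ∀ v, M.mulVec v = N.mulVec v) : M = N := by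
  ext f g
  simpa using congrFun (h (Pi.single g 1)) f

lemma HP₀_zero (H P₀ : Mat n) (hidem : P₀ * P₀ = P₀)
    (hker : ∀ v, H.mulVec v = 0 ↔ P₀.mulVec v = v) : H * P₀ = 0 := by
  apply ext_mulVec; intro v
  rw [← Matrix.mulVec_mulVec, Matrix.zero_mulVec]
  exact (hker _).mpr (by rw [Matrix.mulVec_mulVec, hidem])

lemma P₀H_zero (H P₀ Hinv : Mat n) (hHP₀ : H * P₀ = 0)
    (hinv2 : Hinv * H = 1 - P₀) (hinv3 : H * Hinv = 1 - P₀) : P₀ * H = 0 := by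
  have key : H * (1 - P₀) = (1 - P₀) * H := by
    conv_lhs => rw [← hinv2]
    conv_rhs => rw [← hinv3]
    rw [mul_assoc]
  have key2 : H - H * P₀ = H - P₀ * H := by
    simpa [mul_sub, sub_mul, mul_one, one_mul] using key
  have : H * P₀ = P₀ * H := sub_right_injective key2
  rw [← this, hHP₀]

lemma commP₀ (H P₀ T : Mat n) (hsa : P₀ᴴ = P₀) (hidem : P₀ * P₀ = P₀)
    (hker : ∀ v, H.mulVec v = 0 ↔ P₀.mulVec v = v)
    (hcomm : H * T = T * H) (hherm : Tᴴ = T) : P₀ * T = T * P₀ := by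
  have hHP₀ := HP₀_zero H P₀ hidem hker
  have h1 : P₀ * (T * P₀) = T * P₀ := by
    apply ext_mulVec; intro v
    rw [← Matrix.mulVec_mulVec]
    refine (hker _).mp ?_
    rw [Matrix.mulVec_mulVec, ← mul_assoc, hcomm, mul_assoc, hHP₀, mul_zero,
      Matrix.zero_mulVec]
  have h2 : (P₀ * T) * P₀ = P₀ * T := by
    have := congrArg Matrix.conjTranspose h1
    simp only [Matrix.conjTranspose_mul, hsa, hherm] at this
    exact this
  rw [← h2, mul_assoc, h1]

lemma dsq (T U : Mat n) (hT : T*T = 1) (hU : U*U = 1) (hUT : U*T = T*U) (c c' : ℂ) :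
    (c•T + c'•U)*(c•T + c'•U) = (c^2+c'^2)•(1 : Mat n) + (2*c*c')•(T*U) := by
  simp only [add_mul, mul_add, smul_mul_assoc, mul_smul_comm, hT, hU, hUT, smul_smul]
  module

lemma sq_aff (U : Mat n) (hU : U*U = 1) (x y : ℂ) :
    (x•(1 : Mat n) + y•U)*(x•(1 : Mat n) + y•U) = (x^2+y^2)•(1 : Mat n) + (2*x*y)•U := by
  simp only [add_mul, mul_add, smul_mul_assoc, mul_smul_comm, hU, one_mul, mul_one, smul_smul]
  module

lemma solve (G D E U : Mat n) (s q γ β : ℂ)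
    (h1 : D*G = G*E)
    (h2 : (D*D - s•1)*(D*D - s•1) = q•(1 : Mat n))
    (h3 : (E*E - s•1)*(E*E - s•1) = γ•(1 : Mat n) + β•U)
    (h4 : U*U = 1)
    (h5 : (q-γ)^2 - β^2 ≠ 0) : G = 0 := by
  have hDD : (D*D)*G = G*(E*E) := by rw [mul_assoc, h1, ← mul_assoc, h1, mul_assoc]
  have hK : (D*D - s•1)*G = G*(E*E - s•1) := by
    rw [sub_mul, mul_sub, hDD, smul_mul_assoc, one_mul, mul_smul_comm, mul_one]
  have hKK : q•G = G*(γ•(1 : Mat n) + β•U) := by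
    calc q•G = (q•(1 : Mat n))*G := by rw [smul_mul_assoc, one_mul]
      _ = ((D*D - s•1)*(D*D - s•1))*G := by rw [h2]
      _ = (D*D - s•1)*(G*(E*E - s•1)) := by rw [mul_assoc, hK]
      _ = (G*(E*E - s•1))*(E*E - s•1) := by rw [← mul_assoc, hK]
      _ = G*((E*E - s•1)*(E*E - s•1)) := by rw [mul_assoc]
      _ = _ := by rw [h3]
  have hGU : (q-γ)•G = β•(G*U) := by
    have h6 : q•G = γ•G + β•(G*U) := by
      rw [hKK, mul_add, mul_smul_comm, mul_one, mul_smul_comm]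
    rw [sub_smul, h6]; abel
  have hGU2 : (q-γ)•(G*U) = β•G := by
    have h7 := congrArg (fun X => X*U) hGU
    simp only [smul_mul_assoc] at h7
    rwa [mul_assoc, h4, mul_one] at h7
  have hfin : ((q-γ)^2 - β^2)•G = 0 := by
    have h8 : (q-γ)•((q-γ)•G) = (q-γ)•(β•(G*U)) := by rw [hGU]
    rw [smul_comm (q-γ) β, hGU2, smul_smul, smul_smul] at h8
    rw [sub_smul, pow_two, pow_two, h8, sub_self]
  have h9 := congrArg (fun X => ((q-γ)^2 - β^2)⁻¹ • X) hfin
  simpa [smul_smul, inv_mul_cancel₀ h5] using h9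

lemma intertwine (H P₀ Hinv A B DA DB : Mat n)
    (hP₀H : P₀*H = 0) (hHP₀ : H*P₀ = 0)
    (hinv2 : Hinv*H = 1-P₀) (hinv3 : H*Hinv = 1-P₀)
    (hPA : P₀*DA = DA*P₀) (hPB : P₀*DB = DB*P₀)
    (relA : A*H = H*A - (2:ℂ)•(DA*A))
    (rel2B : B*DB = -(DB*B))
    (relB : B*H = H*B - (2:ℂ)•(DB*B)) :
    DA*(P₀*A*Hinv*B*P₀) = (P₀*A*Hinv*B*P₀)*DB := by
  have hDAA : (2:ℂ)•(DA*A) = H*A - A*H := by rw [relA]; abel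
  have hBDB : (2:ℂ)•(B*DB) = B*H - H*B := by
    have h2 : (2:ℂ)•(DB*B) = H*B - B*H := by rw [relB]; abel
    rw [rel2B, smul_neg, h2]; abel
  have lemA : (2:ℂ)•(DA*(P₀*(A*(Hinv*(B*P₀))))) = -(P₀*(A*((1-P₀)*(B*P₀)))) := by
    rw [← mul_assoc DA P₀, ← hPA, mul_assoc P₀ DA, ← mul_assoc DA A, ← mul_smul_comm,
      ← smul_mul_assoc, hDAA, sub_mul, mul_sub]
    rw [mul_assoc H A, ← mul_assoc P₀ H, hP₀H, zero_mul, zero_sub]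
    rw [mul_assoc A H, ← mul_assoc H Hinv, hinv3]
  have lemB : (2:ℂ)•((P₀*(A*(Hinv*(B*P₀))))*DB) = -(P₀*(A*((1-P₀)*(B*P₀)))) := by
    rw [mul_assoc P₀ (A*(Hinv*(B*P₀))) DB, mul_assoc A (Hinv*(B*P₀)) DB,
      mul_assoc Hinv (B*P₀) DB, mul_assoc B P₀ DB, hPB, ← mul_assoc B DB P₀,
      ← mul_smul_comm, ← mul_smul_comm, ← mul_smul_comm, ← smul_mul_assoc, hBDB]
    rw [sub_mul, mul_assoc B H P₀, hHP₀, mul_zero, zero_sub, mul_assoc H B P₀]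
    rw [mul_neg, ← mul_assoc Hinv H (B*P₀), hinv2, mul_neg, mul_neg]
  have main : (2:ℂ)•(DA*(P₀*(A*(Hinv*(B*P₀))))) = (2:ℂ)•((P₀*(A*(Hinv*(B*P₀))))*DB) :=
    lemA.trans lemB.symm
  have h2ne : (2:ℂ) ≠ 0 := two_ne_zero
  have := congrArg (fun X => ((2:ℂ)⁻¹) • X) main
  simp only [smul_smul, inv_mul_cancel₀ h2ne, one_smul] at this
  simpa only [mul_assoc] using this

lemma prodsq (T U : Mat n) (hT : T*T=1) (hU : U*U=1) (hUT : U*T = T*U) :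
    (T*U)*(T*U) = 1 := by
  rw [mul_assoc T U, ← mul_assoc U T U, hUT, mul_assoc T U U, hU, mul_one, hT]

lemma annih (T U : Mat n) (hT : T*T=1) (hU : U*U=1) (hUT : U*T = T*U) (c c' : ℂ) :
    ((c•T+c'•U)*(c•T+c'•U) - (c^2+c'^2)•1) * ((c•T+c'•U)*(c•T+c'•U) - (c^2+c'^2)•1)
      = ((2*c*c')^2)•(1 : Mat n) := by
  rw [dsq T U hT hU hUT, add_sub_cancel_left, smul_mul_assoc, mul_smul_comm, smul_smul,
    prodsq T U hT hU hUT, ← pow_two]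

lemma annih2 (T U : Mat n) (hT : T*T=1) (hU : U*U=1) (hUT : U*T = T*U) (c c' s : ℂ) :
    ((c•T+c'•U)*(c•T+c'•U) - s•1) * ((c•T+c'•U)*(c•T+c'•U) - s•1)
      = ((c^2+c'^2 - s)^2 + (2*c*c')^2)•(1 : Mat n)
        + (2*(c^2+c'^2-s)*(2*c*c'))•(T*U) := by
  rw [dsq T U hT hU hUT]
  have h : ((c^2+c'^2)•(1 : Mat n) + (2*c*c')•(T*U)) - s•1
      = (c^2+c'^2-s)•(1 : Mat n) + (2*c*c')•(T*U) := by module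
  rw [h, sq_aff (T*U) (prodsq T U hT hU hUT)]

end Rel
end GadgetAux

open GadgetAux in
/-- Two cross-block 2-local Pauli terms sharing a common block `a` generate no
second-order transitions within the zero-eigenspace, provided the block parameters
satisfy `σ₁g_{w₁}⁽ᵃ⁾ + σ₂g_{w₂}⁽ᵃ⁾ + σ₃g_{w₃}⁽ᵇ⁾ + σ₄g_{w₄}⁽ᶜ⁾ ≠ 0` for all sign and
`x/z` choices: then `P₀ A H_pen⁻¹ B P₀ = 0` and `P₀ B H_pen⁻¹ A P₀ = 0`. -/
theorem gadget_coexist_three_blocks (n : ℕ) (gx gz : Fin n → ℝ)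
    (P₀ Hinv : Matrix (Fin n × Fin 4 → Fin 2) (Fin n × Fin 4 → Fin 2) ℂ)
    (hsa : P₀.IsHermitian) (hidem : P₀ * P₀ = P₀)
    (hker : ∀ v : (Fin n × Fin 4 → Fin 2) → ℂ,
      (HpenBlocks n gx gz).mulVec v = 0 ↔ P₀.mulVec v = v)
    (hinv1 : Hinv = (1 - P₀) * Hinv * (1 - P₀))
    (hinv2 : Hinv * HpenBlocks n gx gz = 1 - P₀)
    (hinv3 : HpenBlocks n gx gz * Hinv = 1 - P₀)
    (a b c : Fin n) (hab : a ≠ b) (hac : a ≠ c) (hbc : b ≠ c)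
    (hparam : ∀ σ₁ σ₂ σ₃ σ₄ : ℝ, (σ₁ = 1 ∨ σ₁ = -1) → (σ₂ = 1 ∨ σ₂ = -1) →
      (σ₃ = 1 ∨ σ₃ = -1) → (σ₄ = 1 ∨ σ₄ = -1) → ∀ w₁ w₂ w₃ w₄ : Bool,
      σ₁ * (if w₁ then gx a else gz a) + σ₂ * (if w₂ then gx a else gz a) +
        σ₃ * (if w₃ then gx b else gz b) + σ₄ * (if w₄ then gx c else gz c) ≠ 0)
    (A B : Matrix (Fin n × Fin 4 → Fin 2) (Fin n × Fin 4 → Fin 2) ℂ)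
    (hA : ∃ i j : Fin 4,
      A = pauliAt PauliZ (a, i) * pauliAt PauliZ (b, j) ∨
      A = pauliAt PauliX (a, i) * pauliAt PauliX (b, j) ∨
      A = pauliAt PauliZ (a, i) * pauliAt PauliX (b, j) ∨
      A = pauliAt PauliX (a, i) * pauliAt PauliZ (b, j))
    (hB : ∃ k l : Fin 4,
      B = pauliAt PauliZ (a, k) * pauliAt PauliZ (c, l) ∨
      B = pauliAt PauliX (a, k) * pauliAt PauliX (c, l) ∨
      B = pauliAt PauliZ (a, k) * pauliAt PauliX (c, l) ∨
      B = pauliAt PauliX (a, k) * pauliAt PauliZ (c, l)) :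
    P₀ * A * Hinv * B * P₀ = 0 ∧ P₀ * B * Hinv * A * P₀ = 0 := by
  classical
  obtain ⟨i, j, hA⟩ := hA
  obtain ⟨k, l, hB⟩ := hB
  obtain ⟨w₁, w₂, hAeq⟩ : ∃ w₁ w₂ : Bool,
      A = pauliAt (pw w₁) (a, i) * pauliAt (pw w₂) (b, j) := by
    rcases hA with h | h | h | h
    exacts [⟨false, false, h⟩, ⟨true, true, h⟩, ⟨false, true, h⟩, ⟨true, false, h⟩]
  obtain ⟨w₃, w₄, hBeq⟩ : ∃ w₃ w₄ : Bool,
      B = pauliAt (pw w₃) (a, k) * pauliAt (pw w₄) (c, l) := by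
    rcases hB with h | h | h | h
    exacts [⟨false, false, h⟩, ⟨true, true, h⟩, ⟨false, true, h⟩, ⟨true, false, h⟩]
  have Hrepr : HpenBlocks n gx gz = ∑ e, blk gx gz e := rfl
  rw [Hrepr] at hker hinv2 hinv3
  set H : Mat n := ∑ e, blk gx gz e with hH
  -- real coefficients
  set r1 : ℝ := gr gx gz (!w₁) a with hr1
  set r2 : ℝ := gr gx gz (!w₂) b with hr2
  set r3 : ℝ := gr gx gz (!w₃) a with hr3
  set r4 : ℝ := gr gx gz (!w₄) c with hr4
  set T₁ := trm a (pairOf i) (!w₁) with hT₁d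
  set T₂ := trm b (pairOf j) (!w₂) with hT₂d
  set T₃ := trm a (pairOf k) (!w₃) with hT₃d
  set T₄ := trm c (pairOf l) (!w₄) with hT₄d
  set DA : Mat n := ((r1:ℂ))•T₁ + ((r2:ℂ))•T₂ with hDAd
  set DB : Mat n := ((r3:ℂ))•T₃ + ((r4:ℂ))•T₄ with hDBd
  have relA : A * H = H * A - (2:ℂ)•(DA*A) := by
    rw [hAeq]; exact relO gx gz w₁ w₂ a b i j hab
  have rel2A : A * DA = -(DA * A) := by
    rw [hAeq]; exact rel2O gx gz w₁ w₂ a b i j hab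
  have relB : B * H = H * B - (2:ℂ)•(DB*B) := by
    rw [hBeq]; exact relO gx gz w₃ w₄ a c k l hac
  have rel2B : B * DB = -(DB * B) := by
    rw [hBeq]; exact rel2O gx gz w₃ w₄ a c k l hac
  have hHP₀ : H * P₀ = 0 := HP₀_zero H P₀ hidem hker
  have hP₀H : P₀ * H = 0 := P₀H_zero H P₀ Hinv hHP₀ hinv2 hinv3
  have hPT : ∀ (d : Fin n) (p u : Bool), P₀ * trm d p u = trm d p u * P₀ := by
    intro d p u
    exact commP₀ H P₀ (trm d p u) hsa hidem hker (trm_H_comm gx gz d p u).symm (trm_herm d p u)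
  have hPA : P₀ * DA = DA * P₀ := by
    rw [hDAd]
    simp only [mul_add, add_mul, mul_smul_comm, smul_mul_assoc, hT₁d, hT₂d, hPT]
  have hPB : P₀ * DB = DB * P₀ := by
    rw [hDBd]
    simp only [mul_add, add_mul, mul_smul_comm, smul_mul_assoc, hT₃d, hT₄d, hPT]
  have h1 : DA * (P₀*A*Hinv*B*P₀) = (P₀*A*Hinv*B*P₀) * DB :=
    intertwine H P₀ Hinv A B DA DB hP₀H hHP₀ hinv2 hinv3 hPA hPB relA rel2B relB
  have h1' : DB * (P₀*B*Hinv*A*P₀) = (P₀*B*Hinv*A*P₀) * DA :=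
    intertwine H P₀ Hinv B A DB DA hP₀H hHP₀ hinv2 hinv3 hPB hPA relB rel2A relA
  -- involution and commutation facts
  have hT₁ : T₁ * T₁ = 1 := trm_sq a (pairOf i) (!w₁)
  have hT₂ : T₂ * T₂ = 1 := trm_sq b (pairOf j) (!w₂)
  have hT₃ : T₃ * T₃ = 1 := trm_sq a (pairOf k) (!w₃)
  have hT₄ : T₄ * T₄ = 1 := trm_sq c (pairOf l) (!w₄)
  have hc12 : T₂ * T₁ = T₁ * T₂ := trm_comm b a (pairOf j) (pairOf i) (!w₂) (!w₁)
  have hc34 : T₄ * T₃ = T₃ * T₄ := trm_comm c a (pairOf l) (pairOf k) (!w₄) (!w₃)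
  -- linear factors are nonzero
  have hfac : ∀ σ₁ σ₂ σ₃ σ₄ : ℝ, (σ₁ = 1 ∨ σ₁ = -1) → (σ₂ = 1 ∨ σ₂ = -1) →
      (σ₃ = 1 ∨ σ₃ = -1) → (σ₄ = 1 ∨ σ₄ = -1) →
      σ₁ * r1 + σ₂ * r2 + σ₃ * r3 + σ₄ * r4 ≠ 0 := by
    intro σ₁ σ₂ σ₃ σ₄ hs1 hs2 hs3 hs4 hzero
    refine hparam σ₁ σ₃ σ₂ σ₄ hs1 hs3 hs2 hs4 (!w₁) (!w₃) (!w₂) (!w₄) ?_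
    rw [hr1, hr2, hr3, hr4] at hzero
    simp only [gr] at hzero
    linarith
  have key1 : P₀ * A * Hinv * B * P₀ = 0 := by
    refine solve _ DA DB (T₃*T₄) ((r1:ℂ)^2+(r2:ℂ)^2) ((2*(r1:ℂ)*(r2:ℂ))^2)
      (((r3:ℂ)^2+(r4:ℂ)^2 - ((r1:ℂ)^2+(r2:ℂ)^2))^2 + (2*(r3:ℂ)*(r4:ℂ))^2)
      (2*((r3:ℂ)^2+(r4:ℂ)^2-((r1:ℂ)^2+(r2:ℂ)^2))*(2*(r3:ℂ)*(r4:ℂ)))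
      h1 (annih T₁ T₂ hT₁ hT₂ hc12 _ _) (annih2 T₃ T₄ hT₃ hT₄ hc34 _ _ _)
      (prodsq T₃ T₄ hT₃ hT₄ hc34) ?_
    have hreal : (((2*r1*r2)^2 - ((r3^2+r4^2 - (r1^2+r2^2))^2 + (2*r3*r4)^2))^2
        - (2*(r3^2+r4^2-(r1^2+r2^2))*(2*r3*r4))^2 : ℝ)
        = (r3 + 1*r4 + 1*r1 + 1*r2) * (r3 + 1*r4 + 1*r1 + (-1)*r2) *
          ((r3 + 1*r4 + (-1)*r1 + 1*r2) * (r3 + 1*r4 + (-1)*r1 + (-1)*r2)) *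
          ((r3 + (-1)*r4 + 1*r1 + 1*r2) * (r3 + (-1)*r4 + 1*r1 + (-1)*r2) *
           ((r3 + (-1)*r4 + (-1)*r1 + 1*r2) * (r3 + (-1)*r4 + (-1)*r1 + (-1)*r2))) := by
      ring
    have hfac' : ∀ s2 s3 s4 : ℝ, (s2 = 1 ∨ s2 = -1) → (s3 = 1 ∨ s3 = -1) →
        (s4 = 1 ∨ s4 = -1) → r3 + s2*r4 + s3*r1 + s4*r2 ≠ 0 := by
      intro s2 s3 s4 hs2 hs3 hs4 hz
      exact hfac s3 s4 1 s2 hs3 hs4 (Or.inl rfl) hs2 (by linarith)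
    have hne : (((2*r1*r2)^2 - ((r3^2+r4^2 - (r1^2+r2^2))^2 + (2*r3*r4)^2))^2
        - (2*(r3^2+r4^2-(r1^2+r2^2))*(2*r3*r4))^2 : ℝ) ≠ 0 := by
      rw [hreal]
      exact mul_ne_zero (mul_ne_zero (mul_ne_zero
        (hfac' 1 1 1 (Or.inl rfl) (Or.inl rfl) (Or.inl rfl))
        (hfac' 1 1 (-1) (Or.inl rfl) (Or.inl rfl) (Or.inr rfl)))
        (mul_ne_zero (hfac' 1 (-1) 1 (Or.inl rfl) (Or.inr rfl) (Or.inl rfl))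
          (hfac' 1 (-1) (-1) (Or.inl rfl) (Or.inr rfl) (Or.inr rfl))))
        (mul_ne_zero (mul_ne_zero (hfac' (-1) 1 1 (Or.inr rfl) (Or.inl rfl) (Or.inl rfl))
          (hfac' (-1) 1 (-1) (Or.inr rfl) (Or.inl rfl) (Or.inr rfl)))
          (mul_ne_zero (hfac' (-1) (-1) 1 (Or.inr rfl) (Or.inr rfl) (Or.inl rfl))
            (hfac' (-1) (-1) (-1) (Or.inr rfl) (Or.inr rfl) (Or.inr rfl))))
    have hcast : (((2*(r1:ℂ)*(r2:ℂ))^2 - (((r3:ℂ)^2+(r4:ℂ)^2 - ((r1:ℂ)^2+(r2:ℂ)^2))^2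
          + (2*(r3:ℂ)*(r4:ℂ))^2))^2
        - (2*((r3:ℂ)^2+(r4:ℂ)^2-((r1:ℂ)^2+(r2:ℂ)^2))*(2*(r3:ℂ)*(r4:ℂ)))^2)
        = ((((2*r1*r2)^2 - ((r3^2+r4^2 - (r1^2+r2^2))^2 + (2*r3*r4)^2))^2
        - (2*(r3^2+r4^2-(r1^2+r2^2))*(2*r3*r4))^2 : ℝ) : ℂ) := by
      push_cast; ring
    rw [hcast]
    exact Complex.ofReal_ne_zero.mpr hne
  have key2 : P₀ * B * Hinv * A * P₀ = 0 := by
    refine solve _ DB DA (T₁*T₂) ((r3:ℂ)^2+(r4:ℂ)^2) ((2*(r3:ℂ)*(r4:ℂ))^2)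
      (((r1:ℂ)^2+(r2:ℂ)^2 - ((r3:ℂ)^2+(r4:ℂ)^2))^2 + (2*(r1:ℂ)*(r2:ℂ))^2)
      (2*((r1:ℂ)^2+(r2:ℂ)^2-((r3:ℂ)^2+(r4:ℂ)^2))*(2*(r1:ℂ)*(r2:ℂ)))
      h1' (annih T₃ T₄ hT₃ hT₄ hc34 _ _) (annih2 T₁ T₂ hT₁ hT₂ hc12 _ _ _)
      (prodsq T₁ T₂ hT₁ hT₂ hc12) ?_
    have hreal : (((2*r3*r4)^2 - ((r1^2+r2^2 - (r3^2+r4^2))^2 + (2*r1*r2)^2))^2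
        - (2*(r1^2+r2^2-(r3^2+r4^2))*(2*r1*r2))^2 : ℝ)
        = (r1 + 1*r2 + 1*r3 + 1*r4) * (r1 + 1*r2 + 1*r3 + (-1)*r4) *
          ((r1 + 1*r2 + (-1)*r3 + 1*r4) * (r1 + 1*r2 + (-1)*r3 + (-1)*r4)) *
          ((r1 + (-1)*r2 + 1*r3 + 1*r4) * (r1 + (-1)*r2 + 1*r3 + (-1)*r4) *
           ((r1 + (-1)*r2 + (-1)*r3 + 1*r4) * (r1 + (-1)*r2 + (-1)*r3 + (-1)*r4))) := by
      ring
    have hfac' : ∀ s2 s3 s4 : ℝ, (s2 = 1 ∨ s2 = -1) → (s3 = 1 ∨ s3 = -1) →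
        (s4 = 1 ∨ s4 = -1) → r1 + s2*r2 + s3*r3 + s4*r4 ≠ 0 := by
      intro s2 s3 s4 hs2 hs3 hs4 hz
      exact hfac 1 s2 s3 s4 (Or.inl rfl) hs2 hs3 hs4 (by linarith)
    have hne : (((2*r3*r4)^2 - ((r1^2+r2^2 - (r3^2+r4^2))^2 + (2*r1*r2)^2))^2
        - (2*(r1^2+r2^2-(r3^2+r4^2))*(2*r1*r2))^2 : ℝ) ≠ 0 := by
      rw [hreal]
      exact mul_ne_zero (mul_ne_zero (mul_ne_zero
        (hfac' 1 1 1 (Or.inl rfl) (Or.inl rfl) (Or.inl rfl))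
        (hfac' 1 1 (-1) (Or.inl rfl) (Or.inl rfl) (Or.inr rfl)))
        (mul_ne_zero (hfac' 1 (-1) 1 (Or.inl rfl) (Or.inr rfl) (Or.inl rfl))
          (hfac' 1 (-1) (-1) (Or.inl rfl) (Or.inr rfl) (Or.inr rfl))))
        (mul_ne_zero (mul_ne_zero (hfac' (-1) 1 1 (Or.inr rfl) (Or.inl rfl) (Or.inl rfl))
          (hfac' (-1) 1 (-1) (Or.inr rfl) (Or.inl rfl) (Or.inr rfl)))
          (mul_ne_zero (hfac' (-1) (-1) 1 (Or.inr rfl) (Or.inr rfl) (Or.inl rfl))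
            (hfac' (-1) (-1) (-1) (Or.inr rfl) (Or.inr rfl) (Or.inr rfl))))
    have hcast : (((2*(r3:ℂ)*(r4:ℂ))^2 - (((r1:ℂ)^2+(r2:ℂ)^2 - ((r3:ℂ)^2+(r4:ℂ)^2))^2
          + (2*(r1:ℂ)*(r2:ℂ))^2))^2
        - (2*((r1:ℂ)^2+(r2:ℂ)^2-((r3:ℂ)^2+(r4:ℂ)^2))*(2*(r1:ℂ)*(r2:ℂ)))^2)
        = ((((2*r3*r4)^2 - ((r1^2+r2^2 - (r3^2+r4^2))^2 + (2*r1*r2)^2))^2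
        - (2*(r1^2+r2^2-(r3^2+r4^2))*(2*r1*r2))^2 : ℝ) : ℂ) := by
      push_cast; ring
    rw [hcast]
    exact Complex.ofReal_ne_zero.mpr hne
  exact ⟨key1, key2⟩


end
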